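/- arXiv:2208.03912 — 2 statements merged into one kernel-verified Lean document; each statement's English description precedes it below -/
import Mathlib

section
/- Let Δ be an oriented digraph with out- and in-valency 2 at every vertex, and let σ be an automorphism of Δ that fixes pointwise the vertices of an oriented 3-cycle C. Then σ fixes every vertex that is a neighbor (out- or in-) of a vertex of C. -/
lemma fix_of_two_card {V : Type*} (S : Set V) (hS : S.ncard = 2)
    (f : V → V) (hf : Function.Injective f) (hmap : ∀ y ∈ S, f y ∈ S)
    (x : V) (hx : x ∈ S) (hfx : f x = x) : ∀ w ∈ S, f w = w := by
  obtain ⟨p, q, hpq, rfl⟩ := Set.ncard_eq_two.mp hS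
  intro w hw
  by_cases hwx : w = x
  · rw [hwx, hfx]
  have hfw : f w ∈ ({p, q} : Set V) := hmap w hw
  have hfwx : f w ≠ x := fun h => hwx (hf (h.trans hfx.symm))
  rcases hx with hx | hx <;> rcases hw with hw | hw <;>
    rcases hfw with hfw | hfw <;> simp_all

/-- In an oriented digraph in which every vertex has out-valency and in-valency `2`,
an automorphism fixing pointwise an oriented `3`-cycle `a → b → c → a` fixes every
out- or in-neighbor of each vertex of the cycle. -/
theorem aut_fixes_neighbors_of_fixed_three_cycle
    (V : Type*) [Fintype V] (A : V → V → Prop)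
    (horiented : ∀ v w, ¬ (A v w ∧ A w v))
    (hout : ∀ v, {w | A v w}.ncard = 2)
    (hin : ∀ v, {w | A w v}.ncard = 2)
    (σ : Equiv.Perm V) (hσ : ∀ v w, A v w ↔ A (σ v) (σ w))
    (a b c : V) (hab : A a b) (hbc : A b c) (hca : A c a)
    (hfa : σ a = a) (hfb : σ b = b) (hfc : σ c = c) :
    ∀ w : V, (A a w ∨ A w a ∨ A b w ∨ A w b ∨ A c w ∨ A w c) → σ w = w := by
  intro w hw
  have hinj : Function.Injective (σ : V → V) := σ.injective
  rcases hw with h | h | h | h | h | h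
  · exact fix_of_two_card _ (hout a) σ hinj
      (fun y hy => by simpa [hfa] using (hσ a y).mp hy) b hab hfb w h
  · exact fix_of_two_card _ (hin a) σ hinj
      (fun y hy => by simpa [hfa] using (hσ y a).mp hy) c hca hfc w h
  · exact fix_of_two_card _ (hout b) σ hinj
      (fun y hy => by simpa [hfb] using (hσ b y).mp hy) c hbc hfc w h
  · exact fix_of_two_card _ (hin b) σ hinj
      (fun y hy => by simpa [hfb] using (hσ y b).mp hy) a hab hfa w h
  · exact fix_of_two_card _ (hout c) σ hinj
      (fun y hy => by simpa [hfc] using (hσ c y).mp hy) a hca hfa w h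
  · exact fix_of_two_card _ (hin c) σ hinj
      (fun y hy => by simpa [hfc] using (hσ y c).mp hy) b hbc hfb w h
end

section
/- Every regular oriented digraph on m vertices with 2 ≤ m ≤ 4 has a nontrivial automorphism; equivalently, there is no asymmetric regular oriented digraph on 2, 3, or 4 vertices. -/
/-- Every regular oriented digraph on `m` vertices with `2 ≤ m ≤ 4` has a nontrivial
automorphism: there is no asymmetric regular oriented digraph on `2`, `3` or `4`
vertices. -/
theorem small_regular_oriented_digraph_not_asymmetric
    (m : ℕ) (hm2 : 2 ≤ m) (hm4 : m ≤ 4) (A : Fin m → Fin m → Bool)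
    (horiented : ∀ v w, ¬ (A v w = true ∧ A w v = true))
    (hregular : ∃ k : ℕ, ∀ v,
      (Finset.univ.filter (fun w => A v w = true)).card = k ∧
      (Finset.univ.filter (fun w => A w v = true)).card = k) :
    ∃ σ : Equiv.Perm (Fin m), σ ≠ 1 ∧ ∀ v w, A (σ v) (σ w) = A v w := by
  obtain ⟨k, hk⟩ := hregular
  have hA0 : ∀ v, A v v = false := by
    intro v
    have := horiented v v
    cases h : A v v
    · rfl
    · exact absurd ⟨h, h⟩ this
  -- the two vertices as elements of Fin m
  have hm0 : 0 < m := by omega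
  let v0 : Fin m := ⟨0, by omega⟩
  let v1 : Fin m := ⟨1, by omega⟩
  have hv01 : v0 ≠ v1 := by simp [v0, v1, Fin.ext_iff]
  -- out- and in-neighborhoods are disjoint and avoid v, so 2k ≤ m - 1
  have hk1 : k ≤ 1 := by
    by_contra hk2
    push_neg at hk2
    obtain ⟨h1, h2⟩ := hk v0
    have hdisj : Disjoint (Finset.univ.filter (fun w => A v0 w = true))
        (Finset.univ.filter (fun w => A w v0 = true)) := by
      rw [Finset.disjoint_left]
      intro a ha hb
      simp only [Finset.mem_filter] at ha hb
      exact horiented v0 a ⟨ha.2, hb.2⟩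
    have hsub : (Finset.univ.filter (fun w => A v0 w = true)) ∪
        (Finset.univ.filter (fun w => A w v0 = true)) ⊆ Finset.univ.erase v0 := by
      intro a ha
      rw [Finset.mem_union] at ha
      rw [Finset.mem_erase]
      refine ⟨?_, Finset.mem_univ a⟩
      rintro rfl
      rcases ha with ha | ha <;> simp_all [hA0]
    have := Finset.card_le_card hsub
    rw [Finset.card_union_of_disjoint hdisj, h1, h2] at this
    simp [Finset.card_erase_of_mem, Finset.card_univ] at this
    omega
  interval_cases k
  · -- empty digraph: swap v0 v1
    have hAfalse : ∀ v w, A v w = false := by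
      intro v w
      obtain ⟨h1, _⟩ := hk v
      rw [Finset.card_eq_zero] at h1
      cases h : A v w
      · rfl
      · exfalso
        have : w ∈ Finset.univ.filter (fun u => A v u = true) := by simp [h]
        simp [h1] at this
    refine ⟨Equiv.swap v0 v1, ?_, fun v w => by rw [hAfalse, hAfalse]⟩
    intro h
    have := congrArg (fun σ : Equiv.Perm (Fin m) => σ v0) h
    simp [Equiv.swap_apply_left] at this
    exact hv01 this.symm
  · -- out-degree one: the successor function is a nontrivial automorphism
    have hf : ∀ v, ∃ a, Finset.univ.filter (fun w => A v w = true) = {a} := by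
      intro v
      exact Finset.card_eq_one.mp (hk v).1
    choose f hfspec using hf
    have hmem : ∀ v w, A v w = true ↔ w = f v := by
      intro v w
      constructor
      · intro h
        have : w ∈ Finset.univ.filter (fun u => A v u = true) := by simp [h]
        rw [hfspec v] at this
        simpa using this
      · rintro rfl
        have : f v ∈ ({f v} : Finset (Fin m)) := Finset.mem_singleton_self _
        rw [← hfspec v] at this
        simpa using this
    have hinj : Function.Injective f := by
      intro u v huv
      obtain ⟨b, hb⟩ := Finset.card_eq_one.mp (hk (f u)).2
      have hu : u ∈ ({b} : Finset (Fin m)) := by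
        rw [← hb]; simp [hmem]
      have hv : v ∈ ({b} : Finset (Fin m)) := by
        rw [← hb]; simp [hmem, huv]
      simp at hu hv
      rw [hu, hv]
    let σ : Equiv.Perm (Fin m) := Equiv.ofBijective f (Finite.injective_iff_bijective.mp hinj)
    have hσ : ∀ v, σ v = f v := fun v => rfl
    refine ⟨σ, ?_, ?_⟩
    · intro h
      have : f v0 = v0 := by
        have := congrArg (fun τ : Equiv.Perm (Fin m) => τ v0) h
        simpa [hσ] using this
      have h1 : A v0 (f v0) = true := (hmem v0 (f v0)).mpr rfl
      rw [this, hA0 v0] at h1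
      exact Bool.noConfusion h1
    · intro v w
      rw [hσ, hσ]
      cases h : A v w
      · cases h2 : A (f v) (f w)
        · rfl
        · exfalso
          have h3 : f w = f (f v) := (hmem (f v) (f w)).mp h2
          have h4 : w = f v := hinj h3
          rw [h4, (hmem v (f v)).mpr rfl] at h
          exact Bool.noConfusion h
      · have : w = f v := (hmem v w).mp h
        subst this
        exact (hmem (f v) (f (f v))).mpr rfl
end
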